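/- arXiv:2409.15351 — 4 statements merged into one kernel-verified Lean document; each statement's English description precedes it below -/
import Mathlib

section
/- Let p : E → X be a covering map, e₀ ∈ E, and x₀ = p(e₀). Let Y be a path-connected and locally path-connected topological space with basepoint y₀, and let f : Y → X be continuous with f(y₀) = x₀. Then there exists a continuous map g : Y → E with p ∘ g = f and g(y₀) = e₀ if and only if the image of the induced homomorphism f_* : π₁(Y, y₀) → π₁(X, x₀) is contained in the image of the induced homomorphism p_* : π₁(E, e₀) → π₁(X, x₀). -/
open CategoryTheory

/-- The group homomorphism `f⁎ : π₁(Y, y₀) →* π₁(X, x₀)` induced on fundamental groups by a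
continuous map `f : Y → X` with `f y₀ = x₀`. -/
noncomputable def FundamentalGroup.inducedHom {Y X : Type u} [TopologicalSpace Y]
    [TopologicalSpace X] (f : C(Y, X)) (y₀ : Y) (x₀ : X) (hf : f y₀ = x₀) :
    FundamentalGroup Y y₀ →* FundamentalGroup X x₀ :=
  let F : TopCat.of Y ⟶ TopCat.of X := TopCat.ofHom f
  let Φ : FundamentalGroupoid (TopCat.of Y) ⥤ FundamentalGroupoid (TopCat.of X) :=
    FundamentalGroupoid.fundamentalGroupoidFunctor.map F
  have hobj : Φ.obj ⟨y₀⟩ = (⟨x₀⟩ : FundamentalGroupoid (TopCat.of X)) := by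
    subst hf; rfl
  ((CategoryTheory.eqToIso hobj).conj.toMonoidHom).comp
    (CategoryTheory.Functor.mapEnd ⟨y₀⟩ Φ)

/-- The element of the fundamental group `π₁(X, x)` determined by a loop based at `x`. -/
noncomputable def FundamentalGroup.fromLoop {X : Type u} [TopologicalSpace X] {x : X}
    (α : Path x x) : FundamentalGroup X x :=
  FundamentalGroup.fromPath (X := TopCat.of X) (Quotient.mk (Path.Homotopic.setoid x x) α)

/-! Sufficiency is Mathlib's lifting criterion
`IsCoveringMap.existsUnique_continuousMap_lifts_of_range_le`, once the induced homomorphisms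
are identified with `FundamentalGroup.mapOfEq`; necessity is functoriality of `π₁` applied
to `f = p ∘ g`. -/

namespace FundamentalGroup

theorem inducedHom_eq_mapOfEq {Y X : Type u} [TopologicalSpace Y] [TopologicalSpace X]
    (f : C(Y, X)) (y₀ : Y) (x₀ : X) (hf : f y₀ = x₀) :
    inducedHom f y₀ x₀ hf = mapOfEq f hf := by
  subst hf
  rfl

variable {Z Y X : Type*} [TopologicalSpace Z] [TopologicalSpace Y] [TopologicalSpace X]

theorem mapOfEq_rfl (f : C(Y, X)) (y₀ : Y) : mapOfEq f (rfl : f y₀ = f y₀) = map f y₀ := by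
  ext γ
  simp [mapOfEq_apply]

theorem mapOfEq_comp (g : C(Z, Y)) (f : C(Y, X)) {z : Z} {y : Y} {x : X} (hg : g z = y)
    (hf : f y = x) :
    mapOfEq (f.comp g) (hg ▸ hf : f (g z) = x) = (mapOfEq f hf).comp (mapOfEq g hg) := by
  subst hg hf
  ext γ
  simp [mapOfEq_apply, Path.Homotopic.Quotient.map_comp]

end FundamentalGroup

/-- **Lifting criterion** (Hatcher Prop. 1.33). Let `p : E → X` be a covering map with
`p e₀ = x₀`, and let `Y` be a path-connected, locally path-connected space with basepoint
`y₀`. A continuous map `f : Y → X` with `f y₀ = x₀` lifts to a continuous `g : Y → E` with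
`p ∘ g = f` and `g y₀ = e₀` iff `f⁎ π₁(Y, y₀) ⊆ p⁎ π₁(E, e₀)`. -/
theorem lifting_criterion {E X Y : Type u} [TopologicalSpace E] [TopologicalSpace X]
    [TopologicalSpace Y] [PathConnectedSpace Y] [LocallyPathConnectedSpace Y]
    {p : E → X} (hp : IsCoveringMap p) (e₀ : E) (x₀ : X) (he : p e₀ = x₀)
    (y₀ : Y) (f : C(Y, X)) (hf : f y₀ = x₀) :
    (∃ g : C(Y, E), (∀ y, p (g y) = f y) ∧ g y₀ = e₀) ↔
      (FundamentalGroup.inducedHom f y₀ x₀ hf).range ≤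
        (FundamentalGroup.inducedHom ⟨p, hp.continuous⟩ e₀ x₀ he).range := by
  subst hf
  simp only [FundamentalGroup.inducedHom_eq_mapOfEq, FundamentalGroup.mapOfEq_rfl]
  constructor
  · rintro ⟨g, hgp, rfl⟩
    obtain rfl : f = (⟨p, hp.continuous⟩ : C(E, X)).comp g :=
      ContinuousMap.ext fun y ↦ (hgp y).symm
    rw [← FundamentalGroup.mapOfEq_rfl, FundamentalGroup.mapOfEq_comp g _ rfl he,
      MonoidHom.range_comp]
    exact Subgroup.map_le_range _ _
  · intro hle
    obtain ⟨g, ⟨hg₀, hgp⟩, -⟩ := hp.existsUnique_continuousMap_lifts_of_range_le he hle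
    exact ⟨g, congrFun hgp, hg₀⟩
end

section
/- Let X be a path-connected, locally path-connected topological space with basepoint x₀, and assume X is semilocally simply connected, i.e. every point x ∈ X has a neighbourhood U such that every loop contained in U and based at x is null-homotopic in X. Then for every subgroup H of π₁(X, x₀) there exist a topological space E, a covering map p : E → X with E path-connected, and a point e₀ ∈ E with p(e₀) = x₀, such that the image of p_* : π₁(E, e₀) → π₁(X, x₀) equals H. -/
open CategoryTheory

/-!
A point of the covering space over `x` is a homotopy class of paths from `x₀` to `x`, taken
modulo precomposition with loops in `H`; the topology is generated by the sheets obtained by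
extending such a class along the paths inside an open set `V`. When `V` is path-connected and
its loops are null-homotopic in `X`, the extension does not depend on the path chosen in `V`, so
the sheets over `V` are disjoint copies of `V` and the projection is a covering map. A path `γ`
from `x₀` lifts to `t ↦ [γ|[0, t]]`, so the monodromy of `[γ]` moves the base point to `[γ]`,
which is the base point again exactly when `[γ] ∈ H`.
-/

open Set Topology TopologicalSpace

namespace Path.Homotopic

variable {X : Type*} [TopologicalSpace X] {x y z : X}

namespace Quotient

@[simp]
theorem symm_symm (a : Path.Homotopic.Quotient x y) : a.symm.symm = a := by
  induction a
  simp [← mk_symm]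

@[simp]
theorem symm_trans_rev (a : Path.Homotopic.Quotient x y) (b : Path.Homotopic.Quotient y z) :
    (a.trans b).symm = b.symm.trans a.symm := by
  induction a; induction b
  simp [← mk_symm, ← mk_trans, Path.trans_symm]

@[simp]
theorem trans_symm_cancel_left (a : Path.Homotopic.Quotient x y) (b : Path.Homotopic.Quotient x z) :
    a.trans (a.symm.trans b) = b := by
  rw [← trans_assoc, trans_symm, refl_trans]

@[simp]
theorem symm_trans_cancel_left (a : Path.Homotopic.Quotient x y) (b : Path.Homotopic.Quotient y z) :
    a.symm.trans (a.trans b) = b := by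
  rw [← trans_assoc, symm_trans, refl_trans]

end Quotient

theorem of_range_subset {V : Set X}
    (hV : ∀ γ : Path x x, (∀ t, γ t ∈ V) → γ.Homotopic (Path.refl x)) {δ δ' : Path x y}
    (hδ : range δ ⊆ V) (hδ' : range δ' ⊆ V) : δ.Homotopic δ' := by
  have hloop : (Quotient.mk δ).trans (Quotient.mk δ').symm = .refl x :=
    Quotient.eq.2 <| hV _ <| range_subset_iff.1 <| by
      rw [Path.trans_range, Path.symm_range]
      exact union_subset hδ hδ'
  refine Quotient.eq.1 ?_
  calc Quotient.mk δ
      = ((Quotient.mk δ).trans (Quotient.mk δ').symm).trans (.mk δ') := by simp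
    _ = .mk δ' := by rw [hloop, Quotient.refl_trans]

end Path.Homotopic

theorem IsCoveringMap.mem_range_mapOfEq_iff {E X : Type*} [TopologicalSpace E]
    [TopologicalSpace X] {p : E → X} (cov : IsCoveringMap p) (e : E)
    (γ : FundamentalGroup X (p e)) :
    γ ∈ (FundamentalGroup.mapOfEq ⟨p, cov.continuous⟩ rfl).range ↔
      cov.monodromy γ ⟨e, rfl⟩ = ⟨e, rfl⟩ := by
  constructor
  · rintro ⟨γ, rfl⟩
    rw [FundamentalGroup.mapOfEq_apply]
    simpa using cov.monodromy_map γ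
  · intro h
    refine ⟨(cov.liftPathQuotient γ ⟨e, rfl⟩).cast rfl congr($h.symm), ?_⟩
    rw [FundamentalGroup.mapOfEq_apply, Path.Homotopic.Quotient.map_cast,
      IsCoveringMap.map_liftPathQuotient]
    induction γ using Path.Homotopic.Quotient.ind
    rfl

namespace SubgroupCover

variable {X : Type*} [TopologicalSpace X] {x₀ : X} (H : Subgroup (FundamentalGroup X x₀))

def cosetSetoid (x : X) : Setoid (Path.Homotopic.Quotient x₀ x) where
  r a b := FundamentalGroup.fromPath (a.trans b.symm) ∈ H
  iseqv.refl a := by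
    rw [Path.Homotopic.Quotient.trans_symm]
    exact H.one_mem
  iseqv.symm {a b} h := by
    convert H.inv_mem h using 1
    simp [FundamentalGroup.inv_def]
  iseqv.trans {a b c} hab hbc := by
    convert H.mul_mem hbc hab using 1
    rw [FundamentalGroup.mul_def]
    simp

def Fiber (x : X) : Type _ := Quotient (cosetSetoid H x)

namespace Fiber

variable {H}

def mk {x : X} (a : Path.Homotopic.Quotient x₀ x) : Fiber H x := Quotient.mk _ a

theorem mk_eq_mk_iff {x : X} {a b : Path.Homotopic.Quotient x₀ x} :
    mk a = (mk b : Fiber H x) ↔ FundamentalGroup.fromPath (a.trans b.symm) ∈ H :=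
  Quotient.eq

theorem ind {x : X} {motive : Fiber H x → Prop} (mk : ∀ a, motive (mk a)) (q : Fiber H x) :
    motive q :=
  Quotient.ind mk q

noncomputable def trans {x y : X} (q : Fiber H x) (γ : Path.Homotopic.Quotient x y) :
    Fiber H y :=
  Quotient.map' (·.trans γ) (fun a b (h : _ ∈ H) => show _ ∈ H by simpa using h) q

@[simp]
theorem mk_trans {x y : X} (a : Path.Homotopic.Quotient x₀ x)
    (γ : Path.Homotopic.Quotient x y) : (mk a : Fiber H x).trans γ = mk (a.trans γ) :=
  rfl

@[simp]
theorem trans_refl {x : X} (q : Fiber H x) : q.trans (.refl x) = q := by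
  induction q using Fiber.ind
  simp

@[simp]
theorem trans_trans {x y z : X} (q : Fiber H x) (γ : Path.Homotopic.Quotient x y)
    (δ : Path.Homotopic.Quotient y z) : (q.trans γ).trans δ = q.trans (γ.trans δ) := by
  induction q using Fiber.ind
  simp

theorem trans_left_injective {x y : X} (γ : Path.Homotopic.Quotient x y) :
    Function.Injective fun q : Fiber H x => q.trans γ :=
  fun q q' h => by simpa using congr_arg (·.trans γ.symm) h

instance [PathConnectedSpace X] {x : X} : Nonempty (Fiber H x) :=
  ⟨mk (.mk (PathConnectedSpace.somePath x₀ x))⟩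

instance {x : X} : TopologicalSpace (Fiber H x) := ⊥

instance {x : X} : DiscreteTopology (Fiber H x) := ⟨rfl⟩

end Fiber

end SubgroupCover

structure SubgroupCover {X : Type*} [TopologicalSpace X] {x₀ : X}
    (H : Subgroup (FundamentalGroup X x₀)) where
  proj : X
  coset : SubgroupCover.Fiber H proj

namespace SubgroupCover

variable {X : Type*} [TopologicalSpace X] {x₀ : X} (H : Subgroup (FundamentalGroup X x₀))

def ofPath {x : X} (γ : Path x₀ x) : SubgroupCover H := ⟨x, .mk (.mk γ)⟩

abbrev basepoint : SubgroupCover H := ofPath H (.refl x₀)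

instance : Inhabited (SubgroupCover H) := ⟨basepoint H⟩

variable {H}

theorem ofPath_eq_ofPath_of_coe_eq {x y : X} {γ : Path x₀ x} {δ : Path x₀ y}
    (h : ⇑γ = ⇑δ) : ofPath H γ = ofPath H δ := by
  obtain rfl : x = y := by simpa using congr_fun h 1
  obtain rfl : γ = δ := Path.ext h
  rfl

theorem ofPath_eq_ofPath_iff {x : X} {γ δ : Path x₀ x} :
    ofPath H γ = ofPath H δ ↔ FundamentalGroup.fromPath (.mk (γ.trans δ.symm)) ∈ H := by
  simp only [ofPath, mk.injEq, heq_eq_eq, true_and]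
  exact Fiber.mk_eq_mk_iff

theorem exists_eq_ofPath (e : SubgroupCover H) :
    ∃ (x : X) (γ : Path x₀ x), e = ofPath H γ := by
  obtain ⟨x, q⟩ := e
  induction q using Fiber.ind with | mk a => ?_
  induction a with | mk γ => exact ⟨x, γ, rfl⟩

def sheet {x : X} (q : Fiber H x) (V : Set X) : Set (SubgroupCover H) :=
  {e | ∃ δ : Path x e.proj, range δ ⊆ V ∧ e.coset = q.trans (.mk δ)}

theorem proj_mem_of_mem_sheet {x : X} {q : Fiber H x} {V : Set X} {e : SubgroupCover H}
    (he : e ∈ sheet q V) : e.proj ∈ V := by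
  obtain ⟨δ, hδ, -⟩ := he
  exact hδ ⟨1, δ.target⟩

theorem mem_sheet_self {x : X} (q : Fiber H x) {V : Set X} (hx : x ∈ V) :
    (⟨x, q⟩ : SubgroupCover H) ∈ sheet q V :=
  ⟨.refl x, by simpa using hx, by simp⟩

theorem sheet_mono {x : X} (q : Fiber H x) {V W : Set X} (h : V ⊆ W) :
    sheet q V ⊆ sheet q W :=
  fun _ ⟨δ, hδ, he⟩ => ⟨δ, hδ.trans h, he⟩

theorem sheet_eq_of_mem {x : X} {q : Fiber H x} {V : Set X} {e : SubgroupCover H}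
    (he : e ∈ sheet q V) : sheet e.coset V = sheet q V := by
  obtain ⟨δ, hδ, hq⟩ := he
  ext e'
  constructor
  · rintro ⟨ε, hε, he'⟩
    refine ⟨δ.trans ε, ?_, by simp [he', hq]⟩
    rw [Path.trans_range]
    exact union_subset hδ hε
  · rintro ⟨ε, hε, he'⟩
    refine ⟨δ.symm.trans ε, ?_, by simp [he', hq]⟩
    rw [Path.trans_range, Path.symm_range]
    exact union_subset hδ hε

variable (H) in
def sheets : Set (Set (SubgroupCover H)) :=
  {s | ∃ (x : X) (q : Fiber H x) (V : Set X), IsOpen V ∧ s = sheet q V}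

instance : TopologicalSpace (SubgroupCover H) := .generateFrom (sheets H)

variable (H) in
theorem isTopologicalBasis_sheets : IsTopologicalBasis (sheets H) where
  exists_subset_inter := by
    rintro _ ⟨x, q, V, hV, rfl⟩ _ ⟨x', q', V', hV', rfl⟩ e ⟨he, he'⟩
    refine ⟨sheet e.coset (V ∩ V'), ⟨_, _, _, hV.inter hV', rfl⟩,
      mem_sheet_self _ ⟨proj_mem_of_mem_sheet he, proj_mem_of_mem_sheet he'⟩, ?_⟩
    rw [← sheet_eq_of_mem he, ← sheet_eq_of_mem he']
    exact subset_inter (sheet_mono _ inter_subset_left) (sheet_mono _ inter_subset_right)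
  sUnion_eq := sUnion_eq_univ_iff.2 fun e => ⟨_, ⟨_, e.coset, _, isOpen_univ, rfl⟩,
    mem_sheet_self e.coset (mem_univ _)⟩
  eq_generateFrom := rfl

theorem isOpen_sheet {x : X} (q : Fiber H x) {V : Set X} (hV : IsOpen V) :
    IsOpen (sheet q V) :=
  (isTopologicalBasis_sheets H).isOpen ⟨x, q, V, hV, rfl⟩

variable (H) in
theorem continuous_proj : Continuous (proj (H := H)) :=
  continuous_def.2 fun V hV => (isTopologicalBasis_sheets H).isOpen_iff.2 fun e he =>
    ⟨_, ⟨_, e.coset, V, hV, rfl⟩, mem_sheet_self _ he, fun _ => proj_mem_of_mem_sheet⟩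

theorem image_proj_sheet {x : X} (q : Fiber H x) (V : Set X) :
    proj '' sheet q V = pathComponentIn V x := by
  ext y
  constructor
  · rintro ⟨e, ⟨δ, hδ, -⟩, rfl⟩
    exact ⟨δ, fun t => hδ (mem_range_self t)⟩
  · intro (h : JoinedIn V x y)
    exact ⟨⟨y, q.trans (.mk h.somePath)⟩,
      ⟨h.somePath, range_subset_iff.2 h.somePath_mem, rfl⟩, rfl⟩

variable (H) in
theorem isOpenMap_proj [LocallyPathConnectedSpace X] : IsOpenMap (proj (H := H)) :=
  (isTopologicalBasis_sheets H).isOpenMap_iff.2 <| by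
    rintro _ ⟨x, q, V, hV, rfl⟩
    rw [image_proj_sheet]
    exact hV.pathComponentIn x

section SheetsOverGoodSet

variable {x : X} {V : Set X}

theorem image_proj_sheet_of_isPathConnected (hVc : IsPathConnected V) (hx : x ∈ V)
    (q : Fiber H x) : proj '' sheet q V = V := by
  rw [image_proj_sheet]
  exact pathComponentIn_subset.antisymm (hVc.subset_pathComponentIn hx subset_rfl)

theorem preimage_proj_subset_iUnion_sheet (hVc : IsPathConnected V) (hx : x ∈ V) :
    proj ⁻¹' V ⊆ ⋃ q : Fiber H x, sheet q V := by
  intro e he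
  have h := hVc.joinedIn x hx e.proj he
  refine mem_iUnion.2 ⟨e.coset.trans (Path.Homotopic.Quotient.mk h.somePath).symm,
    h.somePath, range_subset_iff.2 h.somePath_mem, by simp⟩

theorem isOpen_iff_isOpen_preimage_proj_inter_sheet [LocallyPathConnectedSpace X]
    (hVo : IsOpen V) (hVc : IsPathConnected V) (hx : x ∈ V) (q : Fiber H x) {W : Set X}
    (hWV : W ⊆ V) : IsOpen W ↔ IsOpen (proj ⁻¹' W ∩ sheet q V) := by
  refine ⟨fun hW => (hW.preimage (continuous_proj H)).inter (isOpen_sheet q hVo), fun hW => ?_⟩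
  rw [← inter_eq_left.2 hWV, ← image_proj_sheet_of_isPathConnected hVc hx q,
    ← image_preimage_inter]
  exact isOpenMap_proj H _ hW

variable (hV : ∀ γ : Path x x, (∀ t, γ t ∈ V) → γ.Homotopic (Path.refl x))
include hV

theorem trans_mk_eq_of_range_subset (q : Fiber H x) {y : X} {δ δ' : Path x y}
    (hδ : range δ ⊆ V) (hδ' : range δ' ⊆ V) : q.trans (.mk δ) = q.trans (.mk δ') := by
  rw [Path.Homotopic.Quotient.eq.2 (Path.Homotopic.of_range_subset hV hδ hδ')]

theorem injOn_proj_sheet (q : Fiber H x) : InjOn proj (sheet q V) := by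
  rintro ⟨y, r⟩ ⟨δ, hδ, hr⟩ ⟨y', r'⟩ ⟨δ', hδ', hr'⟩ (rfl : y = y')
  dsimp only at δ δ' hr hr'
  rw [hr, hr', trans_mk_eq_of_range_subset hV q hδ hδ']

theorem pairwise_disjoint_sheet :
    Pairwise fun q q' : Fiber H x => Disjoint (sheet q V) (sheet q' V) := by
  intro q q' hne
  refine disjoint_left.2 fun e ⟨δ, hδ, he⟩ ⟨δ', hδ', he'⟩ => hne ?_
  rw [trans_mk_eq_of_range_subset hV q' hδ' hδ, he] at he'
  exact Fiber.trans_left_injective _ he'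

theorem isEvenlyCovered_proj [PathConnectedSpace X] [LocallyPathConnectedSpace X]
    (hVo : IsOpen V) (hVc : IsPathConnected V) (hx : x ∈ V) :
    IsEvenlyCovered (proj (H := H)) x (Fiber H x) :=
  .of_trivialization (x := x) (t := hVo.trivializationDiscrete (fun q => sheet q V) V
      (fun q _ => isOpen_iff_isOpen_preimage_proj_inter_sheet hVo hVc hx q)
      (injOn_proj_sheet hV) (fun q => (image_proj_sheet_of_isPathConnected hVc hx q).ge)
      (pairwise_disjoint_sheet hV) (preimage_proj_subset_iUnion_sheet hVc hx))
    hx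

end SheetsOverGoodSet

variable (H) in
theorem isCoveringMap_proj [PathConnectedSpace X] [LocallyPathConnectedSpace X]
    (hX : ∀ x : X, ∃ U ∈ 𝓝 x, ∀ γ : Path x x, (∀ t, γ t ∈ U) → γ.Homotopic (Path.refl x)) :
    IsCoveringMap (proj (H := H)) := by
  intro x
  obtain ⟨U, hU, hUx⟩ := hX x
  obtain ⟨V, ⟨hVo, hxV, hVc⟩, hVU⟩ := (isOpen_isPathConnected_basis x).mem_iff.1 hU
  exact (isEvenlyCovered_proj (fun γ hγ => hUx γ fun t => hVU (hγ t)) hVo hVc hxV)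
    |>.to_isEvenlyCovered_preimage

theorem continuous_ofPath_subpath {x : X} (γ : Path x₀ x) :
    Continuous fun t => ofPath H ((γ.subpath 0 t).cast γ.source.symm rfl) := by
  refine (isTopologicalBasis_sheets H).continuous_iff.2 ?_
  rintro _ ⟨y, q, V, hV, rfl⟩
  refine isOpen_iff_mem_nhds.2 fun s hs => ?_
  have hγV : γ ⁻¹' V ∈ 𝓝 s := (hV.preimage γ.continuous).mem_nhds (proj_mem_of_mem_sheet hs)
  filter_upwards [ordConnectedComponent_mem_nhds.2 hγV] with t ht
  rw [mem_preimage, ← sheet_eq_of_mem hs]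
  refine ⟨γ.subpath s t, ?_, congr_arg Fiber.mk (Path.Homotopic.Quotient.eq.2 ?_).symm⟩
  · exact (Path.range_subpath γ s t).subset.trans (image_subset_iff.2 ht)
  · exact ⟨Path.Homotopy.subpathTransSubpath γ 0 s t⟩

variable (H) in
def liftPath {x : X} (γ : Path x₀ x) : Path (basepoint H) (ofPath H γ) where
  toFun t := ofPath H ((γ.subpath 0 t).cast γ.source.symm rfl)
  continuous_toFun := continuous_ofPath_subpath γ
  source' := ofPath_eq_ofPath_of_coe_eq (by ext; simp)
  target' := ofPath_eq_ofPath_of_coe_eq (by ext; simp)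

instance : PathConnectedSpace (SubgroupCover H) where
  nonempty := inferInstance
  joined e e' := by
    have h (e : SubgroupCover H) : Joined (basepoint H) e := by
      obtain ⟨x, γ, rfl⟩ := exists_eq_ofPath e
      exact ⟨liftPath H γ⟩
    exact (h e).symm.trans (h e')

theorem monodromy_mk_basepoint (cov : IsCoveringMap (proj (H := H))) {x : X}
    (γ : Path x₀ x) :
    cov.monodromy (.mk γ) ⟨basepoint H, rfl⟩ = ⟨ofPath H γ, rfl⟩ :=
  cov.monodromy_eq_of_map_eq (.mk (liftPath H γ)) rfl

theorem monodromy_basepoint_eq_iff (cov : IsCoveringMap (proj (H := H)))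
    (g : FundamentalGroup X x₀) :
    cov.monodromy g ⟨basepoint H, rfl⟩ = ⟨basepoint H, rfl⟩ ↔ g ∈ H := by
  obtain ⟨γ, rfl⟩ := Path.Homotopic.Quotient.mk_surjective (x₀ := x₀) (x₁ := x₀) g
  rw [monodromy_mk_basepoint]
  refine Subtype.ext_iff.trans ?_
  rw [ofPath_eq_ofPath_iff]
  simp

theorem range_mapOfEq_proj (cov : IsCoveringMap (proj (H := H))) :
    (FundamentalGroup.mapOfEq (x := basepoint H) ⟨proj, cov.continuous⟩ rfl).range = H :=
  Subgroup.ext fun g => (cov.mem_range_mapOfEq_iff _ g).trans (monodromy_basepoint_eq_iff cov g)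

end SubgroupCover

/-- **Existence half of the classification of covering spaces.** If `X` is path-connected,
locally path-connected and semilocally simply connected (every point has a neighbourhood `U`
such that every loop contained in `U` based at it is null-homotopic in `X`), then every
subgroup `H` of `π₁(X, x₀)` is the image of `p⁎ : π₁(E, e₀) →* π₁(X, x₀)` for some
path-connected covering space `p : E → X` with `p e₀ = x₀`. -/
theorem exists_covering_with_range_eq {X : Type u} [TopologicalSpace X] [PathConnectedSpace X]
    [LocallyPathConnectedSpace X]
    (hX : ∀ x : X, ∃ U ∈ nhds x, ∀ γ : Path x x, (∀ t, γ t ∈ U) → γ.Homotopic (Path.refl x))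
    (x₀ : X) (H : Subgroup (FundamentalGroup X x₀)) :
    ∃ (E : Type u) (_ : TopologicalSpace E) (p : E → X) (e₀ : E) (hp : IsCoveringMap p)
      (_ : PathConnectedSpace E) (he : p e₀ = x₀),
      (FundamentalGroup.inducedHom ⟨p, hp.continuous⟩ e₀ x₀ he).range = H := by
  have cov := SubgroupCover.isCoveringMap_proj H hX
  exact ⟨SubgroupCover H, inferInstance, SubgroupCover.proj, SubgroupCover.basepoint H, cov,
    inferInstance, rfl, SubgroupCover.range_mapOfEq_proj cov⟩
end

section
/- Let X be a path-connected, simply connected topological space, let x₀ ∈ X, let n ≥ 1, and let Sⁿ denote the unit sphere in (n+1)-dimensional Euclidean space with a fixed basepoint b. If f, g : Sⁿ → X are continuous maps with f(b) = g(b) = x₀ that are (freely) homotopic, then f and g are homotopic relative to {b}. -/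
/-!
Let `H` be a free homotopy from `f` to `g`; since `X` is simply connected, its trace loop
`t ↦ H (t, b)` is null-homotopic, say through `K`. Pushing every point of the sphere towards the
axis `ℝ b` and renormalising gives a self-map `c`, homotopic to the identity rel `b`, that
collapses the cap `⟪x, b⟫ ≥ 1/2` to `b`. Then `f ∘ c` and `g ∘ c` are homotopic rel `b`: use
`H (t, c x)` off the cap and `K (u x, t)` on it, where `u` rises from `0` on the rim of the cap
to `1` at `b`; the two formulas agree on the rim because `c x = b` there.
-/

open scoped RealInnerProductSpace unitInterval
open NormedSpace

namespace ContinuousMap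

variable {Y X : Type*} [TopologicalSpace Y] [TopologicalSpace X] {b : Y} {x₀ : X}
  {f g : C(Y, X)}

theorem Homotopy.homotopicRel_comp_of_nullhomotopic_evalAt (H : f.Homotopy g)
    (hf : f b = x₀) (hg : g b = x₀)
    (hH : ((H.evalAt b).cast hf.symm hg.symm).Homotopic (Path.refl x₀))
    {c : C(Y, Y)} {φ : C(Y, ℝ)} (hφ : 1 ≤ φ b) (hc : ∀ y, 0 ≤ φ y → c y = b) :
    (f.comp c).HomotopicRel (g.comp c) {b} := by
  obtain ⟨K⟩ := hH
  let u : C(Y, I) := ⟨fun y => Set.projIcc 0 1 zero_le_one (φ y), by fun_prop⟩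
  have hu : u b = 1 := Set.projIcc_of_right_le zero_le_one hφ
  have hcu : ∀ y, ¬ φ y ≤ 0 → c y = b := fun y hy => hc y (not_le.1 hy).le
  refine ⟨{ toFun := fun p => if φ p.2 ≤ 0 then H (p.1, c p.2) else K (u p.2, p.1)
            continuous_toFun := ?_, map_zero_left := ?_, map_one_left := ?_, prop' := ?_ }⟩
  · refine Continuous.if_le (by fun_prop) (by fun_prop) (by fun_prop) continuous_const ?_
    intro p hp
    have hu0 : u p.2 = 0 := Set.projIcc_of_le_left zero_le_one hp.le
    simp [hu0, hc p.2 hp.ge]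
  · intro y
    split_ifs with hy
    · simp
    · simp [hcu y hy, hf]
  · intro y
    split_ifs with hy
    · simp
    · simp [hcu y hy, hg]
  · rintro t y rfl
    simp [show ¬ φ y ≤ 0 by linarith, hu, hcu y (by linarith), hf]

theorem Homotopy.homotopicRel_of_nullhomotopic_evalAt (H : f.Homotopy g)
    (hf : f b = x₀) (hg : g b = x₀)
    (hH : ((H.evalAt b).cast hf.symm hg.symm).Homotopic (Path.refl x₀))
    {c : C(Y, Y)} (hcid : c.HomotopicRel (.id Y) {b}) {φ : C(Y, ℝ)} (hφ : 1 ≤ φ b)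
    (hc : ∀ y, 0 ≤ φ y → c y = b) :
    f.HomotopicRel g {b} :=
  ((hcid.comp_continuousMap f).symm.trans
    (H.homotopicRel_comp_of_nullhomotopic_evalAt hf hg hH hφ hc)).trans
    (hcid.comp_continuousMap g)

end ContinuousMap

section CapCollapse

variable {E : Type*} [NormedAddCommGroup E] [InnerProductSpace ℝ E] {b x : E} {s : ℝ}

noncomputable def capWeight (b x : E) : ℝ := max 0 (min 1 (2 * ⟪x, b⟫))

theorem capWeight_eq_zero (h : ⟪x, b⟫ ≤ 0) : capWeight b x = 0 :=
  max_eq_left (min_le_of_right_le (by linarith))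

theorem capWeight_eq_one (h : 1 / 2 ≤ ⟪x, b⟫) : capWeight b x = 1 := by
  rw [capWeight, min_eq_left (by linarith), max_eq_right zero_le_one]

noncomputable def capPull (b : E) (s : ℝ) (x : E) : E :=
  x - (s * capWeight b x) • (x - ⟪x, b⟫ • b)

theorem inner_capPull (hb : ‖b‖ = 1) : ⟪capPull b s x, b⟫ = ⟪x, b⟫ := by
  simp [capPull, inner_sub_left, inner_smul_left, hb]

theorem capPull_ne_zero (hb : ‖b‖ = 1) (hx : x ≠ 0) : capPull b s x ≠ 0 := by
  rcases le_or_gt ⟪x, b⟫ 0 with hxb | hxb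
  · simpa [capPull, capWeight_eq_zero hxb] using hx
  · intro h
    have := inner_capPull (s := s) (x := x) hb
    rw [h, inner_zero_left] at this
    linarith

theorem capPull_zero : capPull b 0 x = x := by simp [capPull]

theorem capPull_self (hb : ‖b‖ = 1) : capPull b s b = b := by
  simp [capPull, hb]

theorem capPull_one (h : 1 / 2 ≤ ⟪x, b⟫) : capPull b 1 x = ⟪x, b⟫ • b := by
  simp [capPull, capWeight_eq_one h]

noncomputable def sphereCapHomotopy (b : Metric.sphere (0 : E) 1) :
    C(I × Metric.sphere (0 : E) 1, Metric.sphere (0 : E) 1) where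
  toFun p := ⟨normalize (capPull (b : E) p.1 p.2),
    mem_sphere_zero_iff_norm.2 <| norm_normalize_eq_one_iff.2 <|
      capPull_ne_zero (norm_eq_of_mem_sphere b) (ne_zero_of_mem_unit_sphere p.2)⟩
  continuous_toFun := by
    refine Continuous.subtype_mk (Continuous.smul (Continuous.inv₀ ?_ fun p => ?_) ?_) _
    · unfold capPull capWeight; fun_prop
    · exact norm_ne_zero_iff.2 <|
        capPull_ne_zero (norm_eq_of_mem_sphere b) (ne_zero_of_mem_unit_sphere p.2)
    · unfold capPull capWeight; fun_prop

theorem coe_sphereCapHomotopy (b : Metric.sphere (0 : E) 1) (p : I × Metric.sphere (0 : E) 1) :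
    (sphereCapHomotopy b p : E) = normalize (capPull (b : E) p.1 p.2) :=
  rfl

noncomputable def sphereCapHomotopyRel (b : Metric.sphere (0 : E) 1) :
    (ContinuousMap.id _).HomotopyRel ((sphereCapHomotopy b).curry 1) {b} where
  toContinuousMap := sphereCapHomotopy b
  map_zero_left x := Subtype.ext <| (coe_sphereCapHomotopy b (0, x)).trans <| by
    rw [Set.Icc.coe_zero, capPull_zero, normalize_eq_self_of_norm_eq_one (norm_eq_of_mem_sphere x)]
    rfl
  map_one_left _ := rfl
  prop' t x hx := by
    rw [Set.mem_singleton_iff.1 hx]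
    have hb : ‖(b : E)‖ = 1 := norm_eq_of_mem_sphere b
    exact Subtype.ext <| (coe_sphereCapHomotopy b (t, b)).trans <| by
      rw [capPull_self hb, normalize_eq_self_of_norm_eq_one hb]
      rfl

theorem exists_homotopicRel_id_collapsing_cap (b : Metric.sphere (0 : E) 1) :
    ∃ (c : C(Metric.sphere (0 : E) 1, Metric.sphere (0 : E) 1))
      (φ : C(Metric.sphere (0 : E) 1, ℝ)),
      c.HomotopicRel (.id _) {b} ∧ 1 ≤ φ b ∧ ∀ x, 0 ≤ φ x → c x = b := by
  have hb : ‖(b : E)‖ = 1 := norm_eq_of_mem_sphere b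
  refine ⟨(sphereCapHomotopy b).curry 1, ⟨fun x => 2 * ⟪(x : E), b⟫ - 1, by fun_prop⟩,
    ⟨(sphereCapHomotopyRel b).symm⟩, ?_, fun x hx => ?_⟩
  · change 1 ≤ 2 * ⟪(b : E), b⟫ - 1
    rw [real_inner_self_eq_norm_sq, hb]
    norm_num
  · have hx' : 1 / 2 ≤ ⟪(x : E), b⟫ := by
      change 0 ≤ 2 * ⟪(x : E), b⟫ - 1 at hx
      linarith
    refine Subtype.ext ?_
    rw [ContinuousMap.curry_apply, coe_sphereCapHomotopy, Set.Icc.coe_one, capPull_one hx',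
      normalize_smul_of_pos (by linarith), normalize_eq_self_of_norm_eq_one hb]

end CapCollapse

/-- The unit sphere in `ℝ^{n+1}`, as a topological space. -/
abbrev UnitSphere (n : ℕ) : Type :=
  Metric.sphere (0 : EuclideanSpace ℝ (Fin (n + 1))) 1

theorem homotopicRel_of_homotopic_of_simplyConnected_general {X : Type*} [TopologicalSpace X]
    [SimplyConnectedSpace X] (x₀ : X) (n : ℕ)
    (b : UnitSphere n) (f g : C(UnitSphere n, X)) (hf : f b = x₀) (hg : g b = x₀)
    (h : f.Homotopic g) : f.HomotopicRel g {b} := by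
  obtain ⟨H⟩ := h
  obtain ⟨c, φ, hcid, hφ, hc⟩ := exists_homotopicRel_id_collapsing_cap b
  exact H.homotopicRel_of_nullhomotopic_evalAt hf hg
    (SimplyConnectedSpace.paths_homotopic _ _) hcid hφ hc

/-- If `X` is path-connected and simply connected, then any two freely homotopic based maps
`f, g : Sⁿ → X` (with `f b = g b = x₀`) are homotopic rel the basepoint `b`. -/
theorem homotopicRel_of_homotopic_of_simplyConnected {X : Type*} [TopologicalSpace X]
    [PathConnectedSpace X] [SimplyConnectedSpace X] (x₀ : X) (n : ℕ) (hn : 1 ≤ n)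
    (b : UnitSphere n) (f g : C(UnitSphere n, X)) (hf : f b = x₀) (hg : g b = x₀)
    (h : f.Homotopic g) : f.HomotopicRel g {b} :=
  homotopicRel_of_homotopic_of_simplyConnected_general x₀ n b f g hf hg h
end

section
/- Let X be a topological space, x₀ ∈ X, and let Ω = Path(x₀, x₀) denote the space of loops at x₀ with its natural topology. Suppose the two continuous concatenation maps c, c' : Ω × Ω → Ω given by c(α, β) = α · β and c'(α, β) = β · α are homotopic as continuous maps. Then for every n ≥ 1, any two continuous maps f, g : Sⁿ → X with f(b) = g(b) = x₀ that are (freely) homotopic are homotopic relative to {b}, where Sⁿ is the unit sphere in ℝ^{n+1} with fixed basepoint b. -/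
/-- Concatenation `(α, β) ↦ α ⬝ β` on the loop space at `x₀`, as a continuous map. -/
noncomputable def loopConcat {X : Type*} [TopologicalSpace X] (x₀ : X) :
    C(Path x₀ x₀ × Path x₀ x₀, Path x₀ x₀) :=
  ⟨fun q => q.1.trans q.2, Continuous.path_trans continuous_fst continuous_snd⟩

/-- Reversed concatenation `(α, β) ↦ β ⬝ α` on the loop space at `x₀`, as a continuous map. -/
noncomputable def loopConcatSwap {X : Type*} [TopologicalSpace X] (x₀ : X) :
    C(Path x₀ x₀ × Path x₀ x₀, Path x₀ x₀) :=
  ⟨fun q => q.2.trans q.1, Continuous.path_trans continuous_snd continuous_fst⟩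

/-!
Cut `Sⁿ` along its meridians, the half great circles from `-b` to `b` through the points `v` of
the equator `b^⊥ ∩ Sⁿ`. The resulting map `Equator × I → Sⁿ` is a quotient map that collapses
only the two poles, so a map `Sⁿ → X` is a continuous family of paths `P v` whose start does not
depend on `v`, and reparametrizations or homotopies of such families, keeping the ends at `b`
fixed, descend to homotopies rel `b`. Given a free homotopy `H : f ≃ g`, the squares
`(t, u) ↦ H (t, meridian v u)` show that `g` is homotopic rel `b` to the map with meridians
`(f ∘ meridian v) ⬝ γ`, where `γ = H (·, b)` is a loop at `x₀`. Conjugating by one fixed meridian of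
`f` turns the meridians into loops `e v` at `x₀`; homotopy commutativity, applied uniformly in `v`,
gives `e v ⬝ γ ≃ γ ⬝ e v`, and a prefix path can always be contracted through the free south pole,
which removes `γ`.
-/

open scoped unitInterval InnerProductSpace
open Metric Topology

theorem exists_mem_sphere_norm_smul_eq {F : Type*} [NormedAddCommGroup F] [NormedSpace ℝ F]
    [Nonempty (sphere (0 : F) 1)] (w : F) : ∃ v : sphere (0 : F) 1, ‖w‖ • (v : F) = w := by
  by_cases hw : w = 0
  · exact ⟨Classical.arbitrary _, by simp [hw]⟩
  · exact ⟨⟨‖w‖⁻¹ • w, mem_sphere_zero_iff_norm.mpr (norm_smul_inv_norm hw)⟩,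
      smul_inv_smul₀ (norm_ne_zero_iff.mpr hw) w⟩

section Meridian

variable {E : Type*} [NormedAddCommGroup E] [InnerProductSpace ℝ E]

abbrev Equator (b : E) : Type _ := sphere (0 : (ℝ ∙ b)ᗮ) 1

variable (b : sphere (0 : E) 1)

theorem inner_coe_equator (v : Equator (b : E)) : ⟪(b : E), (v : E)⟫_ℝ = 0 :=
  Submodule.mem_orthogonal_singleton_iff_inner_right.mp v.1.2

theorem norm_coe_equator (v : Equator (b : E)) : ‖(v : E)‖ = 1 :=
  mem_sphere_zero_iff_norm.mp v.2

theorem norm_smul_add_smul_equator_sq (v : Equator (b : E)) (h c : ℝ) :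
    ‖h • (b : E) + c • (v : E)‖ ^ 2 = h ^ 2 + c ^ 2 := by
  rw [sq, norm_add_sq_eq_norm_sq_add_norm_sq_real, norm_smul, norm_smul, norm_coe_equator,
    norm_eq_of_mem_sphere b]
  · simp [sq]
  · rw [real_inner_smul_left, real_inner_smul_right, inner_coe_equator, mul_zero, mul_zero]

theorem inner_smul_add_smul_equator (v : Equator (b : E)) (h c : ℝ) :
    ⟪(b : E), h • (b : E) + c • (v : E)⟫_ℝ = h := by
  rw [inner_add_right, real_inner_smul_right, real_inner_smul_right, inner_coe_equator,
    real_inner_self_eq_norm_sq, norm_eq_of_mem_sphere b]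
  ring

noncomputable def meridian (v : Equator (b : E)) : Path (-b) b where
  toFun u := ⟨(2 * u - 1 : ℝ) • (b : E) + √(1 - (2 * u - 1) ^ 2) • (v : E), by
    have : (2 * (u : ℝ) - 1) ^ 2 ≤ 1 := by nlinarith [u.2.1, u.2.2]
    rw [mem_sphere_zero_iff_norm, ← pow_left_inj₀ (norm_nonneg _) zero_le_one two_ne_zero,
      norm_smul_add_smul_equator_sq, Real.sq_sqrt (by linarith)]
    ring⟩
  continuous_toFun := by fun_prop
  source' := by ext; simp
  target' := by ext; norm_num

theorem coe_meridian (v : Equator (b : E)) (u : I) :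
    (meridian b v u : E) = (2 * u - 1 : ℝ) • (b : E) + √(1 - (2 * u - 1) ^ 2) • (v : E) :=
  rfl

noncomputable def meridianMap : C(Equator (b : E) × I, sphere (0 : E) 1) where
  toFun p := meridian b p.1 p.2
  continuous_toFun := Continuous.subtype_mk (by fun_prop) _

@[simp]
theorem meridianMap_apply (p : Equator (b : E) × I) : meridianMap b p = meridian b p.1 p.2 :=
  rfl

theorem meridian_surjective [Nonempty (Equator (b : E))] : Function.Surjective (meridianMap b) := by
  intro x
  set h := ⟪(b : E), (x : E)⟫_ℝ
  have hh : |h| ≤ 1 := by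
    simpa [norm_eq_of_mem_sphere] using abs_real_inner_le_norm (b : E) x
  set w : (ℝ ∙ (b : E))ᗮ := ⟨x - h • b, Submodule.mem_orthogonal_singleton_iff_inner_right.mpr (by
    rw [inner_sub_right, real_inner_smul_right, real_inner_self_eq_norm_sq, norm_eq_of_mem_sphere b]
    ring)⟩
  obtain ⟨v, hv⟩ := exists_mem_sphere_norm_smul_eq w
  have hx : (x : E) = h • (b : E) + ‖w‖ • (v : E) := by
    rw [← Submodule.coe_smul, hv]
    simp [w]
  have hw : √(1 - h ^ 2) = ‖w‖ := by
    have := norm_smul_add_smul_equator_sq b v h ‖w‖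
    rw [← hx, norm_eq_of_mem_sphere x] at this
    rw [show 1 - h ^ 2 = ‖w‖ ^ 2 by linarith, Real.sqrt_sq (norm_nonneg _)]
  refine ⟨(v, ⟨(1 + h) / 2, by linarith [abs_le.mp hh], by linarith [abs_le.mp hh]⟩),
    Subtype.ext ?_⟩
  rw [meridianMap_apply, coe_meridian, hx, show 2 * ((1 + h) / 2) - 1 = h by ring, hw]

theorem factorsThrough_meridian {Y : Type*} {W : Equator (b : E) × I → Y}
    (h₀ : ∀ v v', W (v, 0) = W (v', 0)) (h₁ : ∀ v v', W (v, 1) = W (v', 1)) :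
    W.FactorsThrough (meridianMap b) := by
  rintro ⟨v, u⟩ ⟨v', u'⟩ heq
  have heq' : (meridian b v u : E) = meridian b v' u' := congrArg Subtype.val heq
  rw [coe_meridian, coe_meridian] at heq'
  obtain rfl : u = u' := by
    have := congrArg (⟪(b : E), ·⟫_ℝ) heq'
    simp only [inner_smul_add_smul_equator] at this
    exact Subtype.ext (by linarith)
  rcases eq_or_ne u 0 with rfl | hu₀
  · exact h₀ v v'
  rcases eq_or_ne u 1 with rfl | hu₁
  · exact h₁ v v'
  have hpos : 0 < √(1 - (2 * (u : ℝ) - 1) ^ 2) := by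
    have h0 : (0 : ℝ) < u := unitInterval.pos_iff_ne_zero.mpr hu₀
    have h1 : (u : ℝ) < 1 := unitInterval.lt_one_iff_ne_one.mpr hu₁
    apply Real.sqrt_pos.mpr
    nlinarith
  obtain rfl : v = v' :=
    Subtype.ext (Subtype.ext (smul_right_injective E hpos.ne' (add_left_cancel heq')))
  rfl

theorem nonempty_equator [FiniteDimensional ℝ E] (hE : 2 ≤ Module.finrank ℝ E) :
    Nonempty (Equator (b : E)) := by
  have := (ℝ ∙ (b : E)).finrank_add_finrank_orthogonal
  rw [finrank_span_singleton (ne_zero_of_mem_unit_sphere b)] at this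
  have : Nontrivial (ℝ ∙ (b : E))ᗮ := Module.finrank_pos_iff (R := ℝ) |>.mp (by omega)
  exact (NormedSpace.sphere_nonempty.mpr zero_le_one).to_subtype

variable [FiniteDimensional ℝ E] [Nonempty (Equator (b : E))]

theorem isQuotientMap_meridian : IsQuotientMap (meridianMap b) :=
  (meridianMap b).continuous.isClosedMap.isQuotientMap (meridianMap b).continuous
    (meridian_surjective b)

theorem lift_meridian {Y : Type*} [TopologicalSpace Y] (g : C(Equator (b : E) × I, Y))
    (hg : Function.FactorsThrough g (meridianMap b)) (v : Equator (b : E)) (u : I) :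
    (isQuotientMap_meridian b).lift g hg (meridian b v u) = g (v, u) :=
  DFunLike.congr_fun ((isQuotientMap_meridian b).lift_comp g hg) (v, u)

end Meridian

section MeridianFamilies

variable {E X : Type*} [NormedAddCommGroup E] [InnerProductSpace ℝ E] [TopologicalSpace X]
  (b : sphere (0 : E) 1) {a x₀ : X}

def HasMeridians (K : C(sphere (0 : E) 1, X)) (P : Equator (b : E) → Path a x₀) : Prop :=
  ∀ v u, K (meridian b v u) = P v u

theorem continuous_meridian_map (k : C(sphere (0 : E) 1, X)) :
    Continuous fun v => (meridian b v).map k.continuous :=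
  Path.continuous_uncurry_iff.mp (k.continuous.comp (meridianMap b).continuous)

variable [FiniteDimensional ℝ E] [Nonempty (Equator (b : E))]

theorem exists_hasMeridians {P : Equator (b : E) → Path a x₀} (hP : Continuous P) :
    ∃ K, HasMeridians b K P :=
  ⟨(isQuotientMap_meridian b).lift ⟨fun p => P p.1 p.2, Path.continuous_uncurry_iff.mpr hP⟩
      (factorsThrough_meridian b (fun v v' => by simp) fun v v' => by simp),
    fun v u => lift_meridian b _ _ v u⟩

variable {b}

theorem homotopicRel_of_meridianHomotopy {F G : C(sphere (0 : E) 1, X)}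
    (W : C(I × (Equator (b : E) × I), X))
    (hW₀ : ∀ t v v', W (t, v, 0) = W (t, v', 0)) (hW₁ : ∀ t v, W (t, v, 1) = x₀)
    (hF : ∀ v u, F (meridian b v u) = W (0, v, u))
    (hG : ∀ v u, G (meridian b v u) = W (1, v, u)) :
    F.HomotopicRel G {b} := by
  let K : I → C(sphere (0 : E) 1, X) := fun t => (isQuotientMap_meridian b).lift (W.curry t)
    (factorsThrough_meridian b (hW₀ t) fun v v' => (hW₁ t v).trans (hW₁ t v').symm)
  have hK : ∀ t v u, K t (meridian b v u) = W (t, v, u) := fun t v u => lift_meridian b _ _ v u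
  have hKc : Continuous fun p : I × sphere (0 : E) 1 => K p.1 p.2 :=
    (isQuotientMap_meridian b).continuous_lift_prod_right
      (by simpa only [meridianMap_apply, hK] using W.continuous)
  obtain ⟨v₀⟩ := ‹Nonempty (Equator (b : E))›
  refine ⟨⟨⟨⟨_, hKc⟩, fun x => ?_, fun x => ?_⟩, fun t x hx => ?_⟩⟩
  · obtain ⟨⟨v, u⟩, rfl⟩ := meridian_surjective b x
    exact (hK 0 v u).trans (hF v u).symm
  · obtain ⟨⟨v, u⟩, rfl⟩ := meridian_surjective b x
    exact (hK 1 v u).trans (hG v u).symm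
  · have hx' : x = meridian b v₀ 1 := hx.trans (meridian b v₀).target.symm
    change K t x = F x
    rw [hx', hK, hF, hW₁, hW₁]

/-- The homotopy slides the image of the south pole along `r v` over `[0, ψ 0]`. -/
theorem homotopicRel_of_hasMeridians_reparam {F G : C(sphere (0 : E) 1, X)}
    {r : Equator (b : E) → Path a x₀} (hr : Continuous r) {ψ : I → I} (hψ : Continuous ψ)
    (hψ₁ : ψ 1 = 1) (hr₀ : ∀ v v' (s : I), s ≤ ψ 0 → r v s = r v' s)
    (hF : HasMeridians b F r) (hG : ∀ v u, G (meridian b v u) = r v (ψ u)) :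
    F.HomotopicRel G {b} :=
  homotopicRel_of_meridianHomotopy (x₀ := x₀)
    ⟨fun p => r p.2.1 (Set.Icc.convexComb p.2.2 (ψ p.2.2) p.1), by fun_prop⟩
    (fun t v v' => hr₀ v v' _ (Set.Icc.convexComb_le (unitInterval.nonneg _) t))
    (fun t v => by simp [hψ₁]) (fun v u => by simpa using hF v u) fun v u => by simpa using hG v u

theorem homotopicRel_of_hasMeridians_trans_left {a' : X} {F G : C(sphere (0 : E) 1, X)}
    {P : Equator (b : E) → Path a x₀} (hP : Continuous P) (δ : Path a' a)
    (hF : HasMeridians b F fun v => δ.trans (P v)) (hG : HasMeridians b G P) :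
    F.HomotopicRel G {b} := by
  refine homotopicRel_of_hasMeridians_reparam (by fun_prop)
    (ψ := fun u => ⟨(1 + u) / 2, unitInterval.div_mem (by linarith [u.2.1]) zero_le_two
      (by linarith [u.2.2])⟩) (by fun_prop) (by ext; norm_num) (fun v v' s hs => ?_) hF
    fun v u => ?_
  · have hs : (s : ℝ) ≤ 1 / 2 := by simpa using Subtype.coe_le_coe.mpr hs
    rw [Path.trans_apply, Path.trans_apply, dif_pos hs, dif_pos hs]
  · rw [hG, Path.trans_apply]
    split_ifs with hu
    · have hu : ((1 + u) / 2 : ℝ) ≤ 1 / 2 := hu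
      obtain rfl : u = 0 := Subtype.ext (show (u : ℝ) = 0 by linarith [u.2.1])
      simp
    · congr 1
      ext
      change (u : ℝ) = 2 * ((1 + u) / 2) - 1
      ring

theorem homotopicRel_of_hasMeridians_trans_assoc {a₀ a₁ : X} {F G : C(sphere (0 : E) 1, X)}
    {P : Equator (b : E) → Path a₁ a} (hP : Continuous P) (p : Path a₀ a₁) (q : Path a x₀)
    (hF : HasMeridians b F fun v => p.trans ((P v).trans q))
    (hG : HasMeridians b G fun v => (p.trans (P v)).trans q) :
    F.HomotopicRel G {b} := by
  refine homotopicRel_of_hasMeridians_reparam (by fun_prop)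
    (ψ := fun t => ⟨_, Path.Homotopy.transAssocReparamAux_mem_I t⟩) (by fun_prop)
    (Subtype.ext Path.Homotopy.transAssocReparamAux_one) (fun v v' s hs => ?_) hF fun v u => ?_
  · obtain rfl : s = 0 :=
      le_antisymm (by simpa [Path.Homotopy.transAssocReparamAux_zero] using hs) s.2.1
    simp
  · rw [hG]
    exact congrArg (· u) (Path.Homotopy.trans_assoc_reparam p (P v) q)

theorem homotopicRel_of_hasMeridians_homotopy {F G : C(sphere (0 : E) 1, X)}
    {Φ : I × Equator (b : E) → Path a x₀} (hΦ : Continuous Φ)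
    (hF : HasMeridians b F fun v => Φ (0, v)) (hG : HasMeridians b G fun v => Φ (1, v)) :
    F.HomotopicRel G {b} :=
  homotopicRel_of_meridianHomotopy (x₀ := x₀) ⟨fun p => Φ (p.1, p.2.1) p.2.2, by fun_prop⟩
    (fun t v v' => by simp) (fun t v => by simp) hF hG

theorem homotopicRel_of_hasMeridians_trans_comm {F G : C(sphere (0 : E) 1, X)}
    (Γ : (loopConcat x₀).Homotopy (loopConcatSwap x₀)) {e : Equator (b : E) → Path x₀ x₀}
    (he : Continuous e) (γ : Path x₀ x₀) (hF : HasMeridians b F fun v => (e v).trans γ)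
    (hG : HasMeridians b G fun v => γ.trans (e v)) :
    F.HomotopicRel G {b} :=
  homotopicRel_of_hasMeridians_homotopy (Φ := fun p => Γ (p.1, e p.2, γ)) (by fun_prop)
    (fun v u => by rw [hF]; exact congrArg (· u) (Γ.apply_zero (e v, γ)).symm)
    fun v u => by rw [hG]; exact congrArg (· u) (Γ.apply_one (e v, γ)).symm

theorem homotopicRel_of_hasMeridians_evalAt {f g F G : C(sphere (0 : E) 1, X)}
    (H : f.Homotopy g)
    (hF : HasMeridians b F fun v => ((meridian b v).map f.continuous).trans (H.evalAt b))
    (hG : HasMeridians b G fun v => (H.evalAt (-b)).trans ((meridian b v).map g.continuous)) :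
    F.HomotopicRel G {b} := by
  have : ContractibleSpace I :=
    (convex_Icc (0 : ℝ) 1).contractibleSpace (Set.nonempty_Icc.2 zero_le_one)
  -- `Γ` deforms, inside the square `(t, u) ∈ I × I`, the path along the edges `t = 0`, `u = 1`
  -- into the path along the edges `u = 0`, `t = 1`.
  obtain ⟨Γ⟩ := SimplyConnectedSpace.paths_homotopic
    (((Path.refl 0).prod Path.id).trans (Path.id.prod (Path.refl 1)))
    ((Path.id.prod (Path.refl 0)).trans ((Path.refl 1).prod Path.id))
  refine homotopicRel_of_meridianHomotopy (x₀ := g b)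
    ⟨fun p => H ((Γ (p.1, p.2.2)).1, meridianMap b (p.2.1, (Γ (p.1, p.2.2)).2)), by fun_prop⟩
    (fun t v v' => by simp) (fun t v => by simp) (fun v u => ?_) fun v u => ?_
  · rw [hF]
    by_cases hu : (u : ℝ) ≤ 2⁻¹ <;> simp [Path.trans_apply, hu]
  · rw [hG]
    by_cases hu : (u : ℝ) ≤ 2⁻¹ <;> simp [Path.trans_apply, hu]

theorem homotopicRel_of_hasMeridians_trans_loop
    (hcomm : (loopConcat x₀).Homotopic (loopConcatSwap x₀)) {F G : C(sphere (0 : E) 1, X)}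
    {P : Equator (b : E) → Path a x₀} (hP : Continuous P) (γ : Path x₀ x₀)
    (hF : HasMeridians b F fun v => (P v).trans γ) (hG : HasMeridians b G P) :
    F.HomotopicRel G {b} := by
  obtain ⟨Γ⟩ := hcomm
  obtain ⟨v₀⟩ := ‹Nonempty (Equator (b : E))›
  have he : Continuous fun v => (P v₀).symm.trans (P v) := by fun_prop
  obtain ⟨K₁, hK₁⟩ := exists_hasMeridians b
    (by fun_prop : Continuous fun v => (P v₀).symm.trans ((P v).trans γ))
  obtain ⟨K₂, hK₂⟩ := exists_hasMeridians b
    (by fun_prop : Continuous fun v => ((P v₀).symm.trans (P v)).trans γ)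
  obtain ⟨K₃, hK₃⟩ := exists_hasMeridians b
    (by fun_prop : Continuous fun v => γ.trans ((P v₀).symm.trans (P v)))
  obtain ⟨K₄, hK₄⟩ := exists_hasMeridians b he
  exact (homotopicRel_of_hasMeridians_trans_left (by fun_prop) _ hK₁ hF).symm
    |>.trans <| (homotopicRel_of_hasMeridians_trans_assoc hP _ _ hK₁ hK₂).trans <|
    (homotopicRel_of_hasMeridians_trans_comm Γ he γ hK₂ hK₃).trans <|
    (homotopicRel_of_hasMeridians_trans_left he γ hK₃ hK₄).trans <|
    homotopicRel_of_hasMeridians_trans_left hP _ hK₄ hG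

end MeridianFamilies

/-- If the loop space of `X` at `x₀` is homotopy commutative — the two continuous
concatenation maps `(α, β) ↦ α ⬝ β` and `(α, β) ↦ β ⬝ α` are homotopic — then any two freely
homotopic based maps `f, g : Sⁿ → X` (with `f b = g b = x₀`, `n ≥ 1`) are homotopic rel the
basepoint `b`. -/
theorem homotopicRel_of_homotopic_of_homotopyComm {X : Type*} [TopologicalSpace X] (x₀ : X)
    (hcomm : (loopConcat x₀).Homotopic (loopConcatSwap x₀))
    (n : ℕ) (hn : 1 ≤ n) (b : UnitSphere n) (f g : C(UnitSphere n, X))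
    (hf : f b = x₀) (hg : g b = x₀) (h : f.Homotopic g) : f.HomotopicRel g {b} := by
  obtain ⟨H⟩ := h
  subst hf
  have : Nonempty (Equator (b : EuclideanSpace ℝ (Fin (n + 1)))) :=
    nonempty_equator b (by rw [finrank_euclideanSpace_fin]; omega)
  have hmer := continuous_meridian_map (X := X) b
  let γ : Path (f b) (f b) := (H.evalAt b).cast rfl hg.symm
  obtain ⟨F, hF⟩ := exists_hasMeridians b (by fun_prop :
    Continuous fun v => ((meridian b v).map f.continuous).trans γ)
  obtain ⟨G, hG⟩ := exists_hasMeridians b (by fun_prop :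
    Continuous fun v => (H.evalAt (-b)).trans ((meridian b v).map g.continuous))
  exact (homotopicRel_of_hasMeridians_trans_loop hcomm (hmer f) γ hF fun _ _ => rfl).symm.trans <|
    (homotopicRel_of_hasMeridians_evalAt H hF hG).trans <|
    homotopicRel_of_hasMeridians_trans_left (hmer g) _ hG fun _ _ => rfl
end
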